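/- Let I_1,…,I_k be homogeneous ideals of ℂ[z]. Then in H²_d one has: (1) F_{I_1+…+I_k} = F_{I_1} ∩ … ∩ F_{I_k}, i.e. F_{I_1+…+I_k} is the orthogonal complement of the algebraic sum F_{I_1}^⊥ + … + F_{I_k}^⊥; and (2) F_{I_1∩…∩I_k} is the closure of the algebraic sum F_{I_1} + … + F_{I_k}. -/

import Mathlib

open scoped InnerProductSpace
open MvPolynomial Module

noncomputable section

/-- The `n`-th approximation number of a bounded operator: the distance from `T`
to the set of operators of rank at most `n`. For compact operators on Hilbert space
these are the singular values. -/
def approxNumber {H K : Type*} [NormedAddCommGroup H] [NormedAddCommGroup K]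
    [NormedSpace ℂ H] [NormedSpace ℂ K] (T : H →L[ℂ] K) (n : ℕ) : ℝ :=
  sInf {c : ℝ | ∃ F : H →L[ℂ] K,
    Module.rank ℂ (LinearMap.range (F : H →ₗ[ℂ] K)) ≤ (n : Cardinal) ∧ c = ‖T - F‖}

/-- Membership in the Schatten `p`-class, expressed via approximation numbers
(= singular values): `∑ aₙ(T)^p < ∞`. -/
def MemSchatten {H K : Type*} [NormedAddCommGroup H] [NormedAddCommGroup K]
    [NormedSpace ℂ H] [NormedSpace ℂ K] (p : ℝ) (T : H →L[ℂ] K) : Prop :=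
  Summable fun n : ℕ => approxNumber T n ^ p


/-- Helper instance: the bounded operators on a normed space form a topological semiring. -/
instance {F : Type*} [NormedAddCommGroup F] [NormedSpace ℂ F] :
    IsTopologicalSemiring (F →L[ℂ] F) := inferInstance

/-- The Drury–Arveson space `H²_d`: a Hilbert space completion of `ℂ[z₁,…,z_d]`
with the inner product `⟨z^α, z^β⟩ = δ_{αβ} α!/(|α|)!`, together with the `d`-shift. -/
structure DruryArveson (d : ℕ) where
  H : Type
  [normedAddCommGroup : NormedAddCommGroup H]
  [innerProductSpace : InnerProductSpace ℂ H]
  [completeSpace : CompleteSpace H]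
  emb : MvPolynomial (Fin d) ℂ →ₗ[ℂ] H
  denseRange : DenseRange emb
  inner_monomial : ∀ α β : Fin d →₀ ℕ,
    (inner ℂ (emb (monomial α (1 : ℂ))) (emb (monomial β (1 : ℂ))) : ℂ) =
      if α = β then (∏ i, ((α i).factorial : ℂ)) / ((∑ i, α i).factorial : ℂ) else 0
  shift : Fin d → H →L[ℂ] H
  shift_apply : ∀ (i : Fin d) (p : MvPolynomial (Fin d) ℂ), shift i (emb p) = emb (X i * p)

attribute [instance] DruryArveson.normedAddCommGroup DruryArveson.innerProductSpace
  DruryArveson.completeSpace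

namespace DruryArveson

variable {d : ℕ} (DA : DruryArveson d)

/-- The quotient module `F_I = H²_d ⊖ closure(I)`. -/
def FI (I : Ideal (MvPolynomial (Fin d) ℂ)) : Submodule ℂ DA.H :=
  ((Submodule.map DA.emb (Submodule.restrictScalars ℂ I)).topologicalClosure)ᗮ

instance (I : Ideal (MvPolynomial (Fin d) ℂ)) : CompleteSpace (DA.FI I) :=
  (Submodule.isClosed_orthogonal _).completeSpace_coe

/-- The compressed shift `S_i^I = P_{F_I} S_i |_{F_I}`. -/
def quotShift (I : Ideal (MvPolynomial (Fin d) ℂ)) (i : Fin d) : DA.FI I →L[ℂ] DA.FI I :=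
  ((DA.FI I).orthogonalProjection).comp ((DA.shift i).comp (DA.FI I).subtypeL)

/-- The orthogonal projection of `H²_d` onto `F_I`, as an operator on `H²_d`. -/
def projFI (I : Ideal (MvPolynomial (Fin d) ℂ)) : DA.H →L[ℂ] DA.H :=
  (DA.FI I).subtypeL.comp ((DA.FI I).orthogonalProjection)

/-- `F_I` is `p`-essentially normal: all commutators `[S_i^I, S_j^{I*}]` lie in
the Schatten `p`-class. -/
def PEssentiallyNormal (I : Ideal (MvPolynomial (Fin d) ℂ)) (p : ℝ) : Prop :=
  ∀ i j : Fin d,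
    MemSchatten p
      (DA.quotShift I i ∘L ContinuousLinearMap.adjoint (DA.quotShift I j)
        - ContinuousLinearMap.adjoint (DA.quotShift I j) ∘L DA.quotShift I i)

end DruryArveson

/-- An ideal of `ℂ[z₁,…,z_d]` is homogeneous if it contains all homogeneous components
of each of its elements. -/
def IsHomogeneousIdeal {d : ℕ} (I : Ideal (MvPolynomial (Fin d) ℂ)) : Prop :=
  ∀ p ∈ I, ∀ n : ℕ, homogeneousComponent n p ∈ I

/-- `HasIdealDim I D` says that `D = deg h_I + 1`, where `h_I` is the Hilbert polynomial
of the homogeneous ideal `I`, i.e. `h_I(n) = dim (H_n ⊖ I_n)` for all large `n`. -/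
def HasIdealDim {d : ℕ} (I : Ideal (MvPolynomial (Fin d) ℂ)) (D : ℕ) : Prop :=
  ∃ h : Polynomial ℚ,
    (∀ᶠ n : ℕ in Filter.atTop,
      h.eval (n : ℚ) =
        ((finrank ℂ ↥(homogeneousSubmodule (Fin d) ℂ n)
          - finrank ℂ ↥(Submodule.restrictScalars ℂ I ⊓ homogeneousSubmodule (Fin d) ℂ n) : ℕ) : ℚ)) ∧
    D = h.natDegree + 1

/-- The zero set in the open unit ball `𝔹_d` of an ideal of polynomials. -/
def zeroVariety {d : ℕ} (I : Ideal (MvPolynomial (Fin d) ℂ)) : Set (EuclideanSpace ℂ (Fin d)) :=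
  {z | ‖z‖ < 1 ∧ ∀ p ∈ I, MvPolynomial.eval (fun i => z i) p = 0}

/-- A homogeneous variety in `𝔹_d` is the zero set in the ball of a homogeneous ideal. -/
def IsHomogeneousVariety {d : ℕ} (V : Set (EuclideanSpace ℂ (Fin d))) : Prop :=
  ∃ I : Ideal (MvPolynomial (Fin d) ℂ), IsHomogeneousIdeal I ∧ V = zeroVariety I

/-- The ideal `I(V)` of polynomials vanishing on `V`. -/
def ballVanishingIdeal {d : ℕ} (V : Set (EuclideanSpace ℂ (Fin d))) :
    Ideal (MvPolynomial (Fin d) ℂ) where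
  carrier := {p | ∀ z ∈ V, MvPolynomial.eval (fun i => z i) p = 0}
  add_mem' := fun hp hq z hz => by simp [hp z hz, hq z hz]
  zero_mem' := fun z hz => by simp
  smul_mem' := fun c p hp z hz => by simp [smul_eq_mul, hp z hz]

/-- `F_V := F_{I(V)}`. -/
def DruryArveson.FV {d : ℕ} (DA : DruryArveson d) (V : Set (EuclideanSpace ℂ (Fin d))) :
    Submodule ℂ DA.H :=
  DA.FI (ballVanishingIdeal V)

/-!
Part (1) is lattice duality for orthogonal complements: `F_I` only depends on the closure of
`I`, and `(⨆ j, K j)ᗮ = ⨅ j, (K j)ᗮ`. Taking complements, part (2) amounts to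
`closure (⋂ Iⱼ) = ⋂ closure Iⱼ` in `H²_d`. Monomials of different degrees are orthogonal, so the
orthogonal projection onto the polynomials of degree `≤ N` truncates the homogeneous expansion;
for homogeneous `I` it maps `I`, hence (being continuous with finite-dimensional range) also
`closure I`, into `I`. So the projections of any `x ∈ ⋂ closure Iⱼ` lie in `⋂ Iⱼ`, and they
converge to `x` because the polynomials are dense.
-/

namespace MvPolynomial

variable {σ : Type*} {R : Type*} [CommSemiring R]

def truncTotalDegree (N : ℕ) (p : MvPolynomial σ R) : MvPolynomial σ R :=
  ∑ n ∈ Finset.range (N + 1), homogeneousComponent n p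

theorem coeff_truncTotalDegree (N : ℕ) (p : MvPolynomial σ R) (α : σ →₀ ℕ) :
    coeff α (truncTotalDegree N p) = if α.degree ≤ N then coeff α p else 0 := by
  simp only [truncTotalDegree, coeff_sum, coeff_homogeneousComponent, Finset.sum_ite_eq,
    Finset.mem_range, Nat.lt_succ_iff]

theorem truncTotalDegree_mem_restrictTotalDegree (N : ℕ) (p : MvPolynomial σ R) :
    truncTotalDegree N p ∈ restrictTotalDegree σ R N := by
  rw [mem_restrictTotalDegree, totalDegree, Finset.sup_le_iff]
  intro α hα
  rw [mem_support_iff, coeff_truncTotalDegree] at hα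
  by_contra h
  exact hα (if_neg h)

theorem degree_lt_of_mem_support_sub_truncTotalDegree {R : Type*} [CommRing R] {N : ℕ}
    {p : MvPolynomial σ R} {α : σ →₀ ℕ} (hα : α ∈ (p - truncTotalDegree N p).support) : N < α.degree := by
  rw [mem_support_iff, coeff_sub, coeff_truncTotalDegree] at hα
  by_contra h
  exact hα (by rw [if_pos (not_lt.1 h), sub_self])

end MvPolynomial

theorem IsHomogeneousIdeal.truncTotalDegree_mem {d : ℕ} {I : Ideal (MvPolynomial (Fin d) ℂ)}
    (hI : IsHomogeneousIdeal I) (N : ℕ) {p : MvPolynomial (Fin d) ℂ} (hp : p ∈ I) :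
    truncTotalDegree N p ∈ I :=
  Ideal.sum_mem _ fun n _ => hI p hp n

namespace DruryArveson

variable {d : ℕ} (DA : DruryArveson d)

theorem inner_emb_monomial (α β : Fin d →₀ ℕ) (a b : ℂ) :
    ⟪DA.emb (monomial α a), DA.emb (monomial β b)⟫_ℂ =
      starRingEnd ℂ a * b *
        if α = β then (∏ i, ((α i).factorial : ℂ)) / ((∑ i, α i).factorial : ℂ) else 0 := by
  have smul_monomial_one (γ : Fin d →₀ ℕ) (c : ℂ) : monomial γ c = c • monomial γ 1 := by
    rw [smul_monomial, smul_eq_mul, mul_one]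
  rw [smul_monomial_one α, smul_monomial_one β, map_smul, map_smul, inner_smul_left,
    inner_smul_right, DA.inner_monomial, mul_assoc]

theorem inner_emb_eq_zero_of_disjoint {p q : MvPolynomial (Fin d) ℂ}
    (h : Disjoint p.support q.support) : ⟪DA.emb p, DA.emb q⟫_ℂ = 0 := by
  rw [p.as_sum, q.as_sum, map_sum, map_sum, sum_inner]
  refine Finset.sum_eq_zero fun α hα => ?_
  rw [inner_sum]
  refine Finset.sum_eq_zero fun β hβ => ?_
  have hαβ : α ≠ β := by
    rintro rfl
    exact Finset.disjoint_left.1 h hα hβ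
  rw [DA.inner_emb_monomial, if_neg hαβ, mul_zero]

theorem inner_emb_monomial_one (α : Fin d →₀ ℕ) (p : MvPolynomial (Fin d) ℂ) :
    ⟪DA.emb (monomial α 1), DA.emb p⟫_ℂ =
      coeff α p * ((∏ i, ((α i).factorial : ℂ)) / ((∑ i, α i).factorial : ℂ)) := by
  conv_lhs => rw [p.as_sum]
  rw [map_sum, inner_sum, Finset.sum_eq_single α, DA.inner_emb_monomial, if_pos rfl, map_one,
    one_mul]
  · intro β _ hβα
    rw [DA.inner_emb_monomial, if_neg (Ne.symm hβα), mul_zero]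
  · intro hα
    rw [notMem_support_iff.1 hα, monomial_zero, map_zero, inner_zero_right]

theorem emb_injective : Function.Injective DA.emb := by
  refine (injective_iff_map_eq_zero DA.emb).2 fun p hp => MvPolynomial.ext _ _ fun α => ?_
  have h := DA.inner_emb_monomial_one α p
  rw [hp, inner_zero_right, eq_comm, mul_eq_zero] at h
  refine h.resolve_right (div_ne_zero ?_ ?_)
  · exact Finset.prod_ne_zero_iff.2 fun i _ => Nat.cast_ne_zero.2 (Nat.factorial_ne_zero _)
  · exact Nat.cast_ne_zero.2 (Nat.factorial_ne_zero _)

def degreeLE (N : ℕ) : Submodule ℂ DA.H :=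
  (restrictTotalDegree (Fin d) ℂ N).map DA.emb

instance (N : ℕ) : FiniteDimensional ℂ (DA.degreeLE N) := by
  unfold degreeLE
  infer_instance

theorem degreeLE_mono : Monotone DA.degreeLE := fun _ _ hMN =>
  Submodule.map_mono fun p hp => by
    rw [mem_restrictTotalDegree] at hp ⊢
    exact hp.trans hMN

theorem dense_iSup_degreeLE : ⊤ ≤ (⨆ N, DA.degreeLE N).topologicalClosure := by
  have hall : ⨆ N, restrictTotalDegree (Fin d) ℂ N = ⊤ :=
    eq_top_iff.2 fun p _ => Submodule.mem_iSup_of_mem p.totalDegree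
      ((mem_restrictTotalDegree _ _ _).2 le_rfl)
  simp_rw [degreeLE]
  have hdense : Dense (LinearMap.range DA.emb : Set DA.H) := by
    rw [LinearMap.coe_range]
    exact DA.denseRange
  rw [← Submodule.map_iSup, hall, Submodule.map_top,
    Submodule.dense_iff_topologicalClosure_eq_top.1 hdense]

theorem starProjection_degreeLE_emb (N : ℕ) (p : MvPolynomial (Fin d) ℂ) :
    (DA.degreeLE N).starProjection (DA.emb p) = DA.emb (truncTotalDegree N p) := by
  refine Submodule.eq_starProjection_of_mem_of_inner_eq_zero
    ⟨_, truncTotalDegree_mem_restrictTotalDegree N p, rfl⟩ ?_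
  rintro _ ⟨q, hq, rfl⟩
  rw [← map_sub, inner_eq_zero_symm]
  refine DA.inner_emb_eq_zero_of_disjoint (Finset.disjoint_left.2 fun α hαq hαp => ?_)
  have hα_le : α.degree ≤ N := (le_totalDegree hαq).trans ((mem_restrictTotalDegree _ _ _).1 hq)
  have hα_gt := degree_lt_of_mem_support_sub_truncTotalDegree hαp
  omega

theorem starProjection_degreeLE_mem_of_mem_closure {I : Ideal (MvPolynomial (Fin d) ℂ)}
    (hI : IsHomogeneousIdeal I) (N : ℕ) {x : DA.H}
    (hx : x ∈ ((I.restrictScalars ℂ).map DA.emb).topologicalClosure) :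
    (DA.degreeLE N).starProjection x ∈ (I.restrictScalars ℂ).map DA.emb := by
  set J := (I.restrictScalars ℂ).map DA.emb
  set S := J ⊓ DA.degreeLE N
  have : FiniteDimensional ℂ S := Submodule.finiteDimensional_of_le inf_le_right
  have hmaps : Set.MapsTo (DA.degreeLE N).starProjection J S := by
    rintro _ ⟨q, hq, rfl⟩
    rw [SetLike.mem_coe, starProjection_degreeLE_emb]
    exact ⟨⟨_, hI.truncTotalDegree_mem N hq, rfl⟩,
      ⟨_, truncTotalDegree_mem_restrictTotalDegree N q, rfl⟩⟩
  exact (hmaps.closure_left (ContinuousLinearMap.continuous _) S.closed_of_finiteDimensional hx).1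

theorem closure_map_iInf {ι : Type*} {I : ι → Ideal (MvPolynomial (Fin d) ℂ)}
    (hI : ∀ j, IsHomogeneousIdeal (I j)) :
    (((⨅ j, I j).restrictScalars ℂ).map DA.emb).topologicalClosure =
      ⨅ j, (((I j).restrictScalars ℂ).map DA.emb).topologicalClosure := by
  refine le_antisymm (le_iInf fun j => Submodule.topologicalClosure_mono
    (Submodule.map_mono (Submodule.restrictScalars_mono ℂ (iInf_le I j)))) fun x hx => ?_
  refine mem_closure_of_tendsto
    (Submodule.starProjection_tendsto_self _ DA.degreeLE_mono x DA.dense_iSup_degreeLE)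
    (Filter.Eventually.of_forall fun N => ?_)
  obtain ⟨q, -, hq⟩ := (DA.degreeLE N).starProjection_apply_mem x
  refine ⟨q, ?_, hq⟩
  rw [SetLike.mem_coe, Submodule.restrictScalars_iInf, Submodule.mem_iInf]
  intro j
  rw [← Submodule.comap_map_eq_of_injective DA.emb_injective ((I j).restrictScalars ℂ),
    Submodule.mem_comap, hq]
  exact DA.starProjection_degreeLE_mem_of_mem_closure (hI j) N (Submodule.mem_iInf _ |>.1 hx j)

theorem orthogonal_FI (I : Ideal (MvPolynomial (Fin d) ℂ)) :
    (DA.FI I)ᗮ = ((I.restrictScalars ℂ).map DA.emb).topologicalClosure :=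
  Submodule.orthogonal_orthogonal _

theorem FI_iSup {ι : Type*} (I : ι → Ideal (MvPolynomial (Fin d) ℂ)) :
    DA.FI (⨆ j, I j) = ⨅ j, DA.FI (I j) := by
  simp only [FI, Submodule.orthogonal_closure, Submodule.restrictScalars_iSup,
    Submodule.map_iSup, Submodule.iInf_orthogonal]

theorem FI_iInf {ι : Type*} {I : ι → Ideal (MvPolynomial (Fin d) ℂ)}
    (hI : ∀ j, IsHomogeneousIdeal (I j)) :
    DA.FI (⨅ j, I j) = (⨆ j, DA.FI (I j)).topologicalClosure := by
  rw [← Submodule.orthogonal_orthogonal_eq_closure, ← Submodule.iInf_orthogonal]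
  simp only [orthogonal_FI]
  rw [← DA.closure_map_iInf hI]
  rfl

end DruryArveson

theorem FI_sum_and_inter_general {d k : ℕ} (DA : DruryArveson d)
    (I : Fin k → Ideal (MvPolynomial (Fin d) ℂ)) (hI : ∀ j, IsHomogeneousIdeal (I j)) :
    (DA.FI (⨆ j, I j) = ⨅ j, DA.FI (I j) ∧
      DA.FI (⨆ j, I j) = (⨆ j, (DA.FI (I j))ᗮ)ᗮ) ∧
    DA.FI (⨅ j, I j) = (⨆ j, DA.FI (I j)).topologicalClosure := by
  refine ⟨⟨DA.FI_iSup I, ?_⟩, DA.FI_iInf hI⟩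
  rw [DA.FI_iSup, ← Submodule.iInf_orthogonal]
  simp only [Submodule.orthogonal_orthogonal]

/-- For homogeneous ideals `I_1, …, I_k` of `ℂ[z]`:
(1) `F_{I_1 + … + I_k} = F_{I_1} ∩ … ∩ F_{I_k}`, which is the orthogonal complement of
the algebraic sum `F_{I_1}^⊥ + … + F_{I_k}^⊥`; and
(2) `F_{I_1 ∩ … ∩ I_k}` is the closure of the algebraic sum `F_{I_1} + … + F_{I_k}`. -/
theorem FI_sum_and_inter {d k : ℕ} (hk : 0 < k) (DA : DruryArveson d)
    (I : Fin k → Ideal (MvPolynomial (Fin d) ℂ)) (hI : ∀ j, IsHomogeneousIdeal (I j)) :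
    (DA.FI (⨆ j, I j) = ⨅ j, DA.FI (I j) ∧
      DA.FI (⨆ j, I j) = (⨆ j, (DA.FI (I j))ᗮ)ᗮ) ∧
    DA.FI (⨅ j, I j) = (⨆ j, DA.FI (I j)).topologicalClosure :=
  FI_sum_and_inter_general DA I hI

end
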